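/- arXiv:1206.0493 — 6 statements merged into one kernel-verified Lean document; each statement's English description precedes it below -/
import Mathlib

section
/- For any almost periodic function f on ℝ, the asymptotic mean value M(f) = lim_{T→∞} (1/2T) ∫_{-T}^{T} f(t) dt exists and equals the integral of the canonical extension of f over the Bohr compactification bℝ with respect to the normalized Haar measure. -/
open MeasureTheory Filter

/-- `f : ℝ → ℂ` is almost periodic: bounded, continuous, and for every `ε > 0` the set of
`ε`-almost periods is relatively dense. -/
def IsAlmostPeriodic (f : ℝ → ℂ) : Prop :=
  Continuous f ∧ (∃ C : ℝ, ∀ x : ℝ, ‖f x‖ ≤ C) ∧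
    ∀ ε : ℝ, 0 < ε → ∃ l : ℝ, 0 < l ∧ ∀ a : ℝ, ∃ τ ∈ Set.Icc a (a + l),
      ∀ x : ℝ, ‖f (x + τ) - f x‖ < ε

/-! By translation invariance of `h` and Fubini, `∫ F dh` is the `h`-average of the window
means `(2T)⁻¹ ∫_{-T}^{T} F (κ + ι t) dt`. At `κ = ι s` such a window mean is the mean of the
translate `f (· + s)`. If `‖f‖ ≤ C` and every interval of length `l` contains an `ε`-almost
period `τ`, pick one with `|s - τ| ≤ l`: shifting by `τ` costs at most `ε` pointwise, and the
remaining shift by `s - τ` only moves mass `≤ C l` in and out at each end of the window. So the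
window means at the points of the dense orbit `ι ℝ`, hence by continuity at all `κ`, are within
`ε + C l / T` of the mean of `f`, and `T → ∞` gives the claim. -/

section Averages

variable {E : Type*} [NormedAddCommGroup E] [NormedSpace ℝ E]

theorem norm_intervalIntegral_comp_add_right_sub_le {f : ℝ → E} (hf : Continuous f) {C : ℝ}
    (hC : ∀ x, ‖f x‖ ≤ C) (a b δ : ℝ) :
    ‖(∫ t in a..b, f (t + δ)) - ∫ t in a..b, f t‖ ≤ 2 * C * |δ| := by
  have hint : ∀ c d : ℝ, IntervalIntegrable f volume c d := hf.intervalIntegrable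
  have hend : ∀ c : ℝ, ‖∫ t in c..c + δ, f t‖ ≤ C * |δ| := fun c => by
    simpa using intervalIntegral.norm_integral_le_of_norm_le_const (a := c) (b := c + δ)
      fun x _ => hC x
  rw [intervalIntegral.integral_comp_add_right,
    intervalIntegral.integral_interval_sub_interval_comm' (hint _ _) (hint _ _) (hint _ _)]
  calc ‖(∫ t in b..b + δ, f t) - ∫ t in a..a + δ, f t‖
      ≤ C * |δ| + C * |δ| := (norm_sub_le _ _).trans (add_le_add (hend b) (hend a))
    _ = 2 * C * |δ| := by ring

theorem norm_intervalIntegral_comp_add_sub_le {f : ℝ → E} (hf : Continuous f) {C ε τ : ℝ}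
    (hC : ∀ x, ‖f x‖ ≤ C) (hτ : ∀ x, ‖f (x + τ) - f x‖ ≤ ε) {a b : ℝ} (hab : a ≤ b) (s : ℝ) :
    ‖(∫ t in a..b, f (t + s)) - ∫ t in a..b, f t‖ ≤ ε * (b - a) + 2 * C * |s - τ| := by
  set g : ℝ → E := fun x => f (x + τ)
  have hg : Continuous g := hf.comp (continuous_add_const τ)
  have hshift : (∫ t in a..b, f (t + s)) = ∫ t in a..b, g (t + (s - τ)) := by
    simp only [g, sub_add_cancel, add_assoc]
  have hperiod : ‖(∫ t in a..b, g t) - ∫ t in a..b, f t‖ ≤ ε * (b - a) := by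
    rw [← intervalIntegral.integral_sub (hg.intervalIntegrable _ _) (hf.intervalIntegrable _ _)]
    calc ‖∫ t in a..b, g t - f t‖ ≤ ε * |b - a| :=
          intervalIntegral.norm_integral_le_of_norm_le_const fun x _ => hτ x
      _ = ε * (b - a) := by rw [abs_of_nonneg (sub_nonneg.2 hab)]
  calc ‖(∫ t in a..b, f (t + s)) - ∫ t in a..b, f t‖
      = ‖((∫ t in a..b, g (t + (s - τ))) - ∫ t in a..b, g t)
          + ((∫ t in a..b, g t) - ∫ t in a..b, f t)‖ := by rw [hshift, sub_add_sub_cancel]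
    _ ≤ 2 * C * |s - τ| + ε * (b - a) :=
      (norm_add_le _ _).trans
        (add_le_add (norm_intervalIntegral_comp_add_right_sub_le hg (fun _ => hC _) a b _)
          hperiod)
    _ = ε * (b - a) + 2 * C * |s - τ| := add_comm _ _

section Translates

variable {G : Type*} [TopologicalSpace G] [AddGroup G] [IsTopologicalAddGroup G] (F : C(G, E))
  {γ : ℝ → G}

theorem continuous_intervalIntegral_translate (hγ : Continuous γ) (a b : ℝ) :
    Continuous fun x => ∫ t in a..b, F (x + γ t) :=
  intervalIntegral.continuous_parametric_intervalIntegral_of_continuous'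
    (f := fun x t => F (x + γ t))
    (F.continuous.comp (continuous_fst.add (hγ.comp continuous_snd))) a b

theorem norm_intervalIntegral_translate_sub_le (ι : ℝ →+ G) (hιc : Continuous ι)
    (hιdense : DenseRange ι) {f : ℝ → E} (hF : ∀ t, F (ι t) = f t) {a b M : ℝ}
    (hM : ∀ s, ‖(∫ t in a..b, f (t + s)) - ∫ t in a..b, f t‖ ≤ M) (x : G) :
    ‖(∫ t in a..b, F (x + ι t)) - ∫ t in a..b, f t‖ ≤ M :=
  hιdense.induction_on x
    (isClosed_le ((continuous_intervalIntegral_translate F hιc a b).sub continuous_const).norm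
      continuous_const)
    fun s => by simpa only [← map_add, hF, add_comm s] using hM s

variable [CompactSpace G] [MeasurableSpace G] [BorelSpace G] [CompleteSpace E] (μ : Measure G)

theorem integral_intervalIntegral_translate [IsFiniteMeasure μ] [μ.IsAddRightInvariant]
    (hγ : Continuous γ) (a b : ℝ) :
    ∫ x, (∫ t in a..b, F (x + γ t)) ∂μ = (b - a) • ∫ x, F x ∂μ := by
  wlog hab : a ≤ b generalizing a b
  · rw [← neg_sub, neg_smul, ← this b a (le_of_not_ge hab), ← integral_neg]
    simp only [intervalIntegral.integral_symm a b, neg_neg]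
  have hmeas : StronglyMeasurable (Function.uncurry fun (t : ℝ) (x : G) => F (x + γ t)) :=
    stronglyMeasurable_uncurry_of_continuous_of_stronglyMeasurable
      (fun x => F.continuous.comp (continuous_const.add hγ))
      (fun t => (F.continuous.comp (continuous_add_const (γ t))
        ).stronglyMeasurable_of_hasCompactSupport (HasCompactSupport.of_compactSpace _))
  have hint : Integrable (Function.uncurry fun (t : ℝ) (x : G) => F (x + γ t))
      ((volume.restrict (Set.Ioc a b)).prod μ) :=
    (integrable_const ‖F‖).mono' hmeas.aestronglyMeasurable
      (ae_of_all _ fun p => F.norm_coe_le_norm _)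
  simp only [intervalIntegral.integral_of_le hab]
  rw [← integral_integral_swap hint]
  simp only [integral_add_right_eq_self (fun x => F x), setIntegral_const, measureReal_def,
    Real.volume_Ioc, ENNReal.toReal_ofReal (sub_nonneg.2 hab)]

theorem norm_inv_smul_sub_integral_le [IsProbabilityMeasure μ] [μ.IsAddRightInvariant]
    (hγ : Continuous γ) {a b : ℝ} (hab : a < b) {c : E} {M : ℝ}
    (hM : ∀ x, ‖(∫ t in a..b, F (x + γ t)) - c‖ ≤ M) :
    ‖(b - a)⁻¹ • c - ∫ x, F x ∂μ‖ ≤ M / (b - a) := by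
  have hba : 0 < b - a := sub_pos.2 hab
  have hint : Integrable (fun x => ∫ t in a..b, F (x + γ t)) μ :=
    (continuous_intervalIntegral_translate F hγ a b).integrable_of_hasCompactSupport
      (HasCompactSupport.of_compactSpace _)
  have hmean : ∫ x, F x ∂μ = (b - a)⁻¹ • ∫ x, (∫ t in a..b, F (x + γ t)) ∂μ := by
    rw [integral_intervalIntegral_translate F μ hγ, inv_smul_smul₀ hba.ne']
  have hdev : ‖∫ x, (c - ∫ t in a..b, F (x + γ t)) ∂μ‖ ≤ M := by
    simpa using norm_integral_le_of_norm_le_const (μ := μ)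
      (ae_of_all _ fun x => (norm_sub_rev _ _).trans_le (hM x))
  calc ‖(b - a)⁻¹ • c - ∫ x, F x ∂μ‖
      = (b - a)⁻¹ * ‖∫ x, (c - ∫ t in a..b, F (x + γ t)) ∂μ‖ := by
        rw [hmean, ← smul_sub, integral_sub (integrable_const c) hint, integral_const,
          probReal_univ, one_smul, norm_smul, Real.norm_of_nonneg (inv_nonneg.2 hba.le)]
    _ ≤ (b - a)⁻¹ * M := by gcongr
    _ = M / (b - a) := inv_mul_eq_div _ _

end Translates

end Averages

/-- For an almost periodic `f` on `ℝ`, the asymptotic mean value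
`lim_{T→∞} (1/2T)∫_{-T}^{T} f` exists and equals the Haar integral over the Bohr
compactification `B` of `ℝ` of the canonical extension `F` of `f`. -/
theorem meanValue_eq_haar_integral
    {B : Type*} [TopologicalSpace B] [CompactSpace B] [AddCommGroup B]
    [IsTopologicalAddGroup B] [MeasurableSpace B] [BorelSpace B]
    (ι : ℝ →+ B) (hιc : Continuous ι) (hιdense : DenseRange ι)
    (h : Measure B) [IsProbabilityMeasure h] [Measure.IsAddHaarMeasure h]
    (f : ℝ → ℂ) (hf : IsAlmostPeriodic f)
    (F : C(B, ℂ)) (hF : ∀ t : ℝ, F (ι t) = f t) :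
    Tendsto (fun T : ℝ => (1 / (2 * T)) • ∫ t in (-T)..T, f t)
      atTop (nhds (∫ κ, F κ ∂h)) := by
  obtain ⟨hfc, ⟨C, hC⟩, hap⟩ := hf
  have hC0 : 0 ≤ C := (norm_nonneg _).trans (hC 0)
  refine Metric.tendsto_nhds.2 fun ε hε => ?_
  obtain ⟨l, hl0, hl⟩ := hap (ε / 2) (half_pos hε)
  have hshift : ∀ T, 0 ≤ T → ∀ s, ‖(∫ t in (-T)..T, f (t + s)) - ∫ t in (-T)..T, f t‖
      ≤ ε / 2 * (T - -T) + 2 * C * l := by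
    intro T hT s
    obtain ⟨τ, hτ, hτε⟩ := hl (s - l)
    have hsτ : |s - τ| ≤ l := abs_le.2 ⟨by linarith [hτ.2], by linarith [hτ.1]⟩
    calc _ ≤ ε / 2 * (T - -T) + 2 * C * |s - τ| :=
          norm_intervalIntegral_comp_add_sub_le hfc hC (fun x => (hτε x).le) (by linarith) s
      _ ≤ ε / 2 * (T - -T) + 2 * C * l := by gcongr
  filter_upwards [eventually_gt_atTop 0,
    ((tendsto_const_nhds (x := C * l)).div_atTop tendsto_id).eventually
      (gt_mem_nhds (half_pos hε))]
    with T hT hCl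
  have hbound := norm_inv_smul_sub_integral_le F h hιc (neg_lt_self hT)
    (norm_intervalIntegral_translate_sub_le F ι hιc hιdense hF (hshift T hT.le))
  rw [dist_eq_norm]
  calc ‖(1 / (2 * T)) • (∫ t in (-T)..T, f t) - ∫ κ, F κ ∂h‖
      = ‖(T - -T)⁻¹ • (∫ t in (-T)..T, f t) - ∫ κ, F κ ∂h‖ := by
        rw [one_div, sub_neg_eq_add, two_mul]
    _ ≤ (ε / 2 * (T - -T) + 2 * C * l) / (T - -T) := hbound
    _ = ε / 2 + C * l / T := by field_simp; ring
    _ < ε := by simp only [id] at hCl; linarith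
end

section
/- If A is an invariant Borel subset of a compact abelian group G under the translation action of a dense subgroup H (i.e., A + x = A for all x ∈ H), then the normalized Haar measure of A satisfies h(A) = h(A)², and hence h(A) ∈ {0,1}. -/
open MeasureTheory

/-!
The a.e. stabilizer `{z | (z + ·) ⁻¹' A =ᵐ[h] A}` of a set of finite measure is closed, because
translates of a measurable set vary continuously in measure. Containing the dense subgroup `H`, it
is all of `G`, so `h.restrict A` is again translation invariant. By uniqueness of Haar measure,
`h.restrict A = c • h`; evaluating at `univ` gives `c = h A`, and evaluating at `A` gives
`h A = c * h A = h A * h A`.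
-/

namespace MeasureTheory

section AEStabilizer

variable {G : Type*} [TopologicalSpace G] [AddGroup G] [IsTopologicalAddGroup G]
  [MeasurableSpace G] [BorelSpace G] {μ : Measure G} [μ.IsAddLeftInvariant]
  [μ.InnerRegularCompactLTTop] [IsLocallyFiniteMeasure μ] {A : Set G}

theorem isClosed_setOf_add_left_preimage_ae_eq (hA : NullMeasurableSet A μ) (hμA : μ A ≠ ⊤) :
    IsClosed {z : G | (z + ·) ⁻¹' A =ᵐ[μ] A} :=
  isClosed_setOfPred_preimage_ae_eq (ContinuousMap.mk (fun p : G × G => p.1 + p.2)).curry.continuous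
    (measurePreserving_add_left μ) A hA hμA

theorem add_left_preimage_ae_eq_of_dense (hA : NullMeasurableSet A μ) (hμA : μ A ≠ ⊤)
    {S : Set G} (hS : Dense S) (hSA : ∀ x ∈ S, (x + ·) ⁻¹' A =ᵐ[μ] A) (z : G) :
    (z + ·) ⁻¹' A =ᵐ[μ] A :=
  (isClosed_setOf_add_left_preimage_ae_eq hA hμA).closure_subset_iff.2 hSA (hS z)

end AEStabilizer

theorem isAddLeftInvariant_restrict_of_add_left_preimage_ae_eq {G : Type*} [AddGroup G]
    [MeasurableSpace G] [MeasurableAdd G] {μ : Measure G} [μ.IsAddLeftInvariant] {A : Set G}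
    (hA : MeasurableSet A) (hinv : ∀ z : G, (z + ·) ⁻¹' A =ᵐ[μ] A) :
    (μ.restrict A).IsAddLeftInvariant := by
  refine ⟨fun z => ?_⟩
  calc (μ.restrict A).map (z + ·) = (μ.restrict ((z + ·) ⁻¹' A)).map (z + ·) := by
        rw [Measure.restrict_congr_set (hinv z)]
    _ = (μ.map (z + ·)).restrict A := (Measure.restrict_map (measurable_const_add z) hA).symm
    _ = μ.restrict A := by rw [map_add_left_eq_self μ z]

theorem measure_eq_mul_self_of_isAddLeftInvariant_restrict {G : Type*} [TopologicalSpace G]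
    [CompactSpace G] [AddGroup G] [IsTopologicalAddGroup G] [MeasurableSpace G] [BorelSpace G]
    (μ : Measure G) [IsProbabilityMeasure μ] [μ.IsAddHaarMeasure] (A : Set G)
    [(μ.restrict A).IsAddLeftInvariant] :
    μ A = μ A * μ A := by
  have hsmul := Measure.isAddInvariant_eq_smul_of_compactSpace (μ.restrict A) μ
  set c := Measure.addHaarScalarFactor (μ.restrict A) μ
  have huniv : μ A = c := by
    simpa using congrArg (· Set.univ) hsmul
  have hA : μ A = c * μ A := by
    simpa using congrArg (· A) hsmul
  rwa [← huniv] at hA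

end MeasureTheory

theorem ENNReal.eq_zero_or_eq_one_of_eq_mul_self {a : ENNReal} (ha : a ≠ ⊤) (h : a = a * a) :
    a = 0 ∨ a = 1 :=
  (eq_or_ne a 0).imp id fun h0 => (ENNReal.mul_eq_left h0 ha).1 h.symm

/-- If `A` is a Borel subset of a compact abelian group `G` invariant under translation by
every element of a dense subgroup `H`, then the normalized Haar measure of `A` satisfies
`h(A) = h(A)²`, and hence `h(A) ∈ {0,1}`. -/
theorem invariant_set_measure_idempotent
    {G : Type*} [TopologicalSpace G] [CompactSpace G] [AddCommGroup G]
    [IsTopologicalAddGroup G] [MeasurableSpace G] [BorelSpace G]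
    (h : Measure G) [IsProbabilityMeasure h] [Measure.IsAddHaarMeasure h]
    (H : AddSubgroup G) (hHdense : Dense (H : Set G))
    (A : Set G) (hA : MeasurableSet A)
    (hinv : ∀ x ∈ H, (fun g => g + x) ⁻¹' A = A) :
    h A = h A * h A ∧ (h A = 0 ∨ h A = 1) := by
  have hinv_ae : ∀ z : G, (z + ·) ⁻¹' A =ᵐ[h] A := by
    refine add_left_preimage_ae_eq_of_dense hA.nullMeasurableSet (measure_ne_top h A) hHdense
      fun x hx => ?_
    simp_rw [add_comm x, hinv x hx]
    rfl
  have := isAddLeftInvariant_restrict_of_add_left_preimage_ae_eq hA hinv_ae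
  have hsq := measure_eq_mul_self_of_isAddLeftInvariant_restrict h A
  exact ⟨hsq, ENNReal.eq_zero_or_eq_one_of_eq_mul_self (measure_ne_top h A) hsq⟩
end

section
/- If ω₁, …, ω_k are real numbers that are linearly independent over ℚ, then for any nonnegative integers l₁, …, l_k, the asymptotic mean value M(∏_{j=1}^k cos(ω_j t)^{l_j}) equals ∏_{j=1}^k M(cos(ω_j t)^{l_j}); consequently the functions cos(ω₁ t), …, cos(ω_k t) are stochastically independent with respect to the Haar measure of the Bohr compactification of ℝ. -/
/-!
By the binomial theorem applied to `cos x = (e^{ix} + e^{-ix}) / 2`, each `cos (ω_j t) ^ l_j` is a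
linear combination of `cos (n ω_j t)` with `n = 2r - l_j`, and the product is a linear combination
of `cos ((∑_j n_j ω_j) t)` with coefficients the products of the single-factor coefficients. The
mean of `cos (ν t)` is `1` if `ν = 0` and `0` otherwise. Rational independence says that
`∑_j n_j ω_j = 0` exactly when every `n_j ω_j = 0`, so the indicator of a vanishing frequency
factorizes over `j`, and the mean of the product becomes the product of the means.
-/

open MeasureTheory Filter

/-- The asymptotic mean value of a real-valued function on `ℝ`. -/
def HasMeanValue (f : ℝ → ℝ) (A : ℝ) : Prop :=
  Tendsto (fun T : ℝ => (1 / (2 * T)) * ∫ t in (-T)..T, f t) atTop (nhds A)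

namespace HasMeanValue

theorem const (c : ℝ) : HasMeanValue (fun _ => c) c := by
  refine tendsto_const_nhds.congr' ?_
  filter_upwards [eventually_gt_atTop 0] with T hT
  rw [intervalIntegral.integral_const, smul_eq_mul]
  field_simp
  ring

theorem const_mul {f : ℝ → ℝ} {A : ℝ} (hf : HasMeanValue f A) (c : ℝ) :
    HasMeanValue (fun t => c * f t) (c * A) := by
  refine (Tendsto.const_mul c hf).congr fun T => ?_
  rw [intervalIntegral.integral_const_mul]
  ring

theorem finsetSum {ι : Type*} {s : Finset ι} {f : ι → ℝ → ℝ} {A : ι → ℝ}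
    (hint : ∀ i ∈ s, LocallyIntegrable (f i)) (hf : ∀ i ∈ s, HasMeanValue (f i) (A i)) :
    HasMeanValue (fun t => ∑ i ∈ s, f i t) (∑ i ∈ s, A i) := by
  refine (tendsto_finsetSum s hf).congr fun T => ?_
  rw [intervalIntegral.integral_finsetSum fun i hi =>
    ((hint i hi).integrableOn_isCompact isCompact_uIcc).intervalIntegrable, Finset.mul_sum]

end HasMeanValue

theorem hasMeanValue_cos_mul (a : ℝ) :
    HasMeanValue (fun t => Real.cos (a * t)) (if a = 0 then 1 else 0) := by
  rcases eq_or_ne a 0 with rfl | ha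
  · simpa using HasMeanValue.const 1
  rw [if_neg ha]
  have hbound : ∀ T > 0, ‖(1 / (2 * T)) * ∫ t in (-T)..T, Real.cos (a * t)‖ ≤ |a|⁻¹ * T⁻¹ := by
    intro T hT
    rw [intervalIntegral.integral_comp_mul_left (fun x => Real.cos x) ha, integral_cos,
      mul_neg, Real.sin_neg, sub_neg_eq_add, ← two_mul, smul_eq_mul, Real.norm_eq_abs,
      abs_mul, abs_mul, abs_mul, abs_inv, abs_of_pos (by positivity : 0 < 1 / (2 * T)), abs_two]
    calc 1 / (2 * T) * (|a|⁻¹ * (2 * |Real.sin (a * T)|))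
        ≤ 1 / (2 * T) * (|a|⁻¹ * (2 * 1)) := by gcongr; exact Real.abs_sin_le_one _
      _ = |a|⁻¹ * T⁻¹ := by field_simp
  refine squeeze_zero_norm' ?_ (by simpa using tendsto_inv_atTop_zero.const_mul |a|⁻¹)
  filter_upwards [eventually_gt_atTop 0] with T hT using hbound T hT

theorem hasMeanValue_sum_mul_cos {ι : Type*} (s : Finset ι) (c ν : ι → ℝ) :
    HasMeanValue (fun t => ∑ i ∈ s, c i * Real.cos (ν i * t))
      (∑ i ∈ s, if ν i = 0 then c i else 0) := by
  refine HasMeanValue.finsetSum (fun i _ => ?_) fun i _ => ?_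
  · exact (continuous_const.mul
      (Real.continuous_cos.comp (continuous_const_mul _))).locallyIntegrable
  · simpa [mul_ite] using (hasMeanValue_cos_mul (ν i)).const_mul (c i)

noncomputable def cosPowCoeff (l r : ℕ) : ℝ := l.choose r / 2 ^ l

def cosPowFreq (l r : ℕ) : ℤ := 2 * r - l

theorem Complex.cos_pow_eq_sum_exp (z : ℂ) (l : ℕ) :
    cos z ^ l = ∑ r : Fin (l + 1), (cosPowCoeff l r : ℂ) * exp (cosPowFreq l r * z * I) := by
  rw [Fin.sum_univ_eq_sum_range (fun r => (cosPowCoeff l r : ℂ) * exp (cosPowFreq l r * z * I)),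
    cos, div_pow, add_pow, Finset.sum_div]
  refine Finset.sum_congr rfl fun r hr => ?_
  have hrl : r ≤ l := Nat.lt_succ_iff.mp (Finset.mem_range.mp hr)
  rw [← exp_nat_mul, ← exp_nat_mul, ← exp_add, cosPowCoeff, cosPowFreq, Nat.cast_sub hrl]
  push_cast
  ring_nf

theorem eq_sum_mul_cos_of_ofReal_eq {ι : Type*} {s : Finset ι} {y : ℝ} {c φ : ι → ℝ}
    (h : (y : ℂ) = ∑ i ∈ s, (c i : ℂ) * Complex.exp (φ i * Complex.I)) :
    y = ∑ i ∈ s, c i * Real.cos (φ i) := by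
  simpa [Complex.re_sum, Complex.re_ofReal_mul, Complex.exp_ofReal_mul_I_re]
    using congrArg Complex.re h

theorem cos_pow_eq_sum_mul_cos (x : ℝ) (l : ℕ) :
    Real.cos x ^ l = ∑ r : Fin (l + 1), cosPowCoeff l r * Real.cos (cosPowFreq l r * x) := by
  refine eq_sum_mul_cos_of_ofReal_eq ?_
  push_cast
  exact Complex.cos_pow_eq_sum_exp x l

theorem prod_cos_pow_eq_sum_mul_cos {ι : Type*} [Fintype ι] [DecidableEq ι] (θ : ι → ℝ)
    (l : ι → ℕ) :
    ∏ j, Real.cos (θ j) ^ l j = ∑ x : ∀ j, Fin (l j + 1),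
      (∏ j, cosPowCoeff (l j) (x j)) * Real.cos (∑ j, cosPowFreq (l j) (x j) * θ j) := by
  refine eq_sum_mul_cos_of_ofReal_eq ?_
  push_cast
  simp only [Complex.cos_pow_eq_sum_exp, Fintype.prod_sum, Finset.prod_mul_distrib,
    ← Complex.exp_sum, Finset.sum_mul]

noncomputable def cosPowMean (a : ℝ) (l : ℕ) : ℝ :=
  ∑ r : Fin (l + 1), if cosPowFreq l r * a = 0 then cosPowCoeff l r else 0

theorem hasMeanValue_cos_mul_pow (a : ℝ) (l : ℕ) :
    HasMeanValue (fun t => Real.cos (a * t) ^ l) (cosPowMean a l) := by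
  simp only [cos_pow_eq_sum_mul_cos, ← mul_assoc]
  exact hasMeanValue_sum_mul_cos _ _ _

theorem hasMeanValue_prod_cos_mul_pow {ι : Type*} [Fintype ι] [DecidableEq ι] (ω : ι → ℝ)
    (l : ι → ℕ) :
    HasMeanValue (fun t => ∏ j, Real.cos (ω j * t) ^ l j) (∑ x : ∀ j, Fin (l j + 1),
      if ∑ j, cosPowFreq (l j) (x j) * ω j = 0 then ∏ j, cosPowCoeff (l j) (x j) else 0) := by
  simp only [prod_cos_pow_eq_sum_mul_cos, ← mul_assoc, ← Finset.sum_mul]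
  exact hasMeanValue_sum_mul_cos _ _ _

theorem LinearIndependent.sum_intCast_mul_eq_zero_iff {ι : Type*} [Fintype ι] {ω : ι → ℝ}
    (hω : LinearIndependent ℚ ω) (n : ι → ℤ) :
    ∑ j, (n j : ℝ) * ω j = 0 ↔ ∀ j, (n j : ℝ) * ω j = 0 := by
  refine ⟨fun h j => ?_, fun h => Finset.sum_eq_zero fun j _ => h j⟩
  have hn := Fintype.linearIndependent_iff.mp (hω.restrict_scalars' ℤ) n
    (by simpa only [zsmul_eq_mul] using h)
  simp [hn j]

theorem prod_cosPowMean_of_linearIndependent {ι : Type*} [Fintype ι] [DecidableEq ι]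
    {ω : ι → ℝ} (hω : LinearIndependent ℚ ω) (l : ι → ℕ) :
    ∏ j, cosPowMean (ω j) (l j) = ∑ x : ∀ j, Fin (l j + 1),
      if ∑ j, cosPowFreq (l j) (x j) * ω j = 0 then ∏ j, cosPowCoeff (l j) (x j) else 0 := by
  simp only [cosPowMean, Fintype.prod_sum, Fintype.prod_ite_zero,
    hω.sum_intCast_mul_eq_zero_iff]

/-- Kac: if `ω₁, …, ω_k` are rationally independent reals, then for any nonnegative integers
`l₁, …, l_k` each `cos(ω_j t)^{l_j}` has a mean value `m_j`, and the mean value of the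
product `∏_j cos(ω_j t)^{l_j}` equals `∏_j m_j`; i.e. the functions `cos(ω_j t)` are
stochastically independent with respect to the Haar measure of the Bohr compactification. -/
theorem kac_stochastic_independence_of_cosines
    (k : ℕ) (ω : Fin k → ℝ) (hind : LinearIndependent ℚ ω) (l : Fin k → ℕ) :
    ∃ m : Fin k → ℝ,
      (∀ j : Fin k, HasMeanValue (fun t => Real.cos (ω j * t) ^ l j) (m j)) ∧
      HasMeanValue (fun t => ∏ j : Fin k, Real.cos (ω j * t) ^ l j) (∏ j : Fin k, m j) := by
  refine ⟨fun j => cosPowMean (ω j) (l j), fun j => hasMeanValue_cos_mul_pow (ω j) (l j), ?_⟩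
  rw [prod_cosPowMean_of_linearIndependent hind l]
  exact hasMeanValue_prod_cos_mul_pow ω l
end

section
/- With Q_N = ∏_{k=0}^N |P_k| and the property M(∏_{j∈F}|P_j|²) = 1 for all finite index sets F, the following are equivalent: (1) M(∏_{k=0}^N |P_k|) → 0 as N → ∞; (2) inf over all finite subsequences n₁ < … < n_L of M(∏_{ℓ=1}^L |P_{n_ℓ}|) equals 0. -/
/-!
For finite `F ⊆ G`, Cauchy–Schwarz applied twice (first to `√f · (√f g)`, then to `g · (f g)`,
with `f = ∏_F |P|`, `g = ∏_{G∖F} |P|`) gives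
`∫ ∏_G |P| ≤ (∫ ∏_F |P|)^{1/2} (∫ ∏_{G∖F} |P|²)^{1/4} (∫ ∏_G |P|²)^{1/4} = (∫ ∏_F |P|)^{1/2}`.
Every finite `F` lies in some `range (N + 1)`, so one small `∫ ∏_F |P|` makes all later full
products small; the converse is immediate.
-/

open MeasureTheory Filter

theorem integral_mul_le_sqrt_mul_sqrt {α : Type*} [MeasurableSpace α] {μ : Measure α}
    {f g : α → ℝ} (hf0 : 0 ≤ᵐ[μ] f) (hg0 : 0 ≤ᵐ[μ] g) (hf : MemLp f 2 μ) (hg : MemLp g 2 μ) :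
    ∫ a, f a * g a ∂μ ≤ √(∫ a, f a ^ 2 ∂μ) * √(∫ a, g a ^ 2 ∂μ) := by
  rw [← ENNReal.ofReal_ofNat] at hf hg
  simpa only [Real.rpow_two, Real.sqrt_eq_rpow] using
    integral_mul_le_Lp_mul_Lq_of_nonneg .two_two hf0 hg0 hf hg

section CompactSpace

variable {B : Type*} [TopologicalSpace B] [CompactSpace B] [MeasurableSpace B] [BorelSpace B]
  {μ : Measure B} [IsFiniteMeasure μ]

theorem Continuous.memLp_of_compactSpace {f : B → ℝ} (hf : Continuous f) (p : ENNReal) :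
    MemLp f p μ :=
  .of_bound hf.aestronglyMeasurable ‖(⟨f, hf⟩ : C(B, ℝ))‖
    (.of_forall fun x => ContinuousMap.norm_coe_le_norm ⟨f, hf⟩ x)

theorem integral_mul_le_sqrt_mul_rpow_mul_rpow {f g : B → ℝ} (hf : Continuous f)
    (hg : Continuous g) (hf0 : ∀ x, 0 ≤ f x) (hg0 : ∀ x, 0 ≤ g x) :
    ∫ x, f x * g x ∂μ ≤
      √(∫ x, f x ∂μ) * (∫ x, g x ^ 2 ∂μ) ^ (4⁻¹ : ℝ) * (∫ x, (f x * g x) ^ 2 ∂μ) ^ (4⁻¹ : ℝ) := by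
  have hsf : Continuous fun x => √(f x) := hf.sqrt
  have split_f : ∫ x, f x * g x ∂μ ≤ √(∫ x, f x ∂μ) * √(∫ x, f x * g x ^ 2 ∂μ) :=
    calc ∫ x, f x * g x ∂μ = ∫ x, √(f x) * (√(f x) * g x) ∂μ := by
          simp only [← mul_assoc, Real.mul_self_sqrt (hf0 _)]
      _ ≤ √(∫ x, √(f x) ^ 2 ∂μ) * √(∫ x, (√(f x) * g x) ^ 2 ∂μ) :=
          integral_mul_le_sqrt_mul_sqrt (.of_forall fun x => Real.sqrt_nonneg (f x))
            (.of_forall fun x => mul_nonneg (Real.sqrt_nonneg (f x)) (hg0 x))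
            (hsf.memLp_of_compactSpace 2) ((hsf.mul hg).memLp_of_compactSpace 2)
      _ = √(∫ x, f x ∂μ) * √(∫ x, f x * g x ^ 2 ∂μ) := by
          simp only [mul_pow, Real.sq_sqrt (hf0 _)]
  have split_g : ∫ x, f x * g x ^ 2 ∂μ ≤ √(∫ x, g x ^ 2 ∂μ) * √(∫ x, (f x * g x) ^ 2 ∂μ) :=
    calc ∫ x, f x * g x ^ 2 ∂μ = ∫ x, g x * (f x * g x) ∂μ := by congr 1 with x; ring
      _ ≤ _ := integral_mul_le_sqrt_mul_sqrt (.of_forall hg0)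
          (.of_forall fun x => mul_nonneg (hf0 x) (hg0 x))
          (hg.memLp_of_compactSpace 2) ((hf.mul hg).memLp_of_compactSpace 2)
  have sqrt_sqrt : ∀ {a : ℝ}, 0 ≤ a → √√a = a ^ (4⁻¹ : ℝ) := fun ha => by
    rw [Real.sqrt_eq_rpow, Real.sqrt_eq_rpow, ← Real.rpow_mul ha]; norm_num
  calc ∫ x, f x * g x ∂μ ≤ √(∫ x, f x ∂μ) * √(∫ x, f x * g x ^ 2 ∂μ) := split_f
    _ ≤ √(∫ x, f x ∂μ) * √(√(∫ x, g x ^ 2 ∂μ) * √(∫ x, (f x * g x) ^ 2 ∂μ)) := by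
      gcongr
    _ = _ := by
      rw [Real.sqrt_mul (Real.sqrt_nonneg _), sqrt_sqrt (integral_nonneg fun x => sq_nonneg _),
        sqrt_sqrt (integral_nonneg fun x => sq_nonneg _), mul_assoc]

theorem integral_prod_norm_le_sqrt_of_subset {ι E : Type*} [DecidableEq ι]
    [NormedAddCommGroup E] (P : ι → C(B, E))
    (hnorm : ∀ F : Finset ι, ∫ x, ∏ j ∈ F, ‖P j x‖ ^ 2 ∂μ = 1) {F G : Finset ι} (hFG : F ⊆ G) :
    ∫ x, ∏ j ∈ G, ‖P j x‖ ∂μ ≤ √(∫ x, ∏ j ∈ F, ‖P j x‖ ∂μ) := by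
  have hcont : ∀ F : Finset ι, Continuous fun x => ∏ j ∈ F, ‖P j x‖ := fun F =>
    continuous_finsetProd F fun j _ => (P j).continuous.norm
  have hnonneg : ∀ F : Finset ι, ∀ x, 0 ≤ ∏ j ∈ F, ‖P j x‖ := fun F x =>
    Finset.prod_nonneg fun j _ => norm_nonneg _
  have := integral_mul_le_sqrt_mul_rpow_mul_rpow (μ := μ) (hcont F) (hcont (G \ F))
    (hnonneg F) (hnonneg (G \ F))
  simpa only [mul_comm (∏ j ∈ F, _), Finset.prod_sdiff hFG, ← Finset.prod_pow, hnorm,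
    Real.one_rpow, mul_one] using this

end CompactSpace

theorem full_products_tendsto_zero_iff_inf_zero_general
    {B : Type*} [TopologicalSpace B] [CompactSpace B]
    [MeasurableSpace B] [BorelSpace B]
    (h : Measure B) [IsProbabilityMeasure h]
    (P : ℕ → C(B, ℂ))
    (hnorm : ∀ F : Finset ℕ, ∫ κ, ∏ j ∈ F, ‖P j κ‖ ^ 2 ∂h = 1) :
    Tendsto (fun N : ℕ => ∫ κ, ∏ k ∈ Finset.range (N + 1), ‖P k κ‖ ∂h) atTop (nhds 0) ↔
    ∀ ε : ℝ, 0 < ε → ∃ F : Finset ℕ, F.Nonempty ∧ ∫ κ, ∏ j ∈ F, ‖P j κ‖ ∂h < ε := by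
  constructor
  · intro hlim ε hε
    obtain ⟨N, hN⟩ := (hlim.eventually (gt_mem_nhds hε)).exists
    exact ⟨_, Finset.nonempty_range_add_one, hN⟩
  · intro hinf
    refine tendsto_order.2 ⟨fun a ha => .of_forall fun N => ha.trans_le ?_, fun ε hε => ?_⟩
    · exact integral_nonneg fun κ => Finset.prod_nonneg fun k _ => norm_nonneg _
    obtain ⟨F, hF, hFε⟩ := hinf (ε ^ 2) (by positivity)
    filter_upwards [eventually_ge_atTop (F.max' hF)] with N hN
    have hFN : F ⊆ Finset.range (N + 1) := fun j hj =>
      Finset.mem_range_succ_iff.2 ((F.le_max' j hj).trans hN)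
    exact (integral_prod_norm_le_sqrt_of_subset P hnorm hFN).trans_lt ((Real.sqrt_lt' hε).2 hFε)

/-- For the partial products of a generalized Riesz product (with
`∫ ∏_{j∈F} |P j|² dh = 1` for all finite `F`), the following are equivalent:
(1) `∫ ∏_{k=0}^N |P k| dh → 0` as `N → ∞`;
(2) the infimum over all finite subsequences `n₁ < … < n_L` of
`∫ ∏_ℓ |P_{n_ℓ}| dh` is `0`. -/
theorem full_products_tendsto_zero_iff_inf_zero
    {B : Type*} [TopologicalSpace B] [CompactSpace B] [T2Space B]
    [MeasurableSpace B] [BorelSpace B]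
    (h : Measure B) [IsProbabilityMeasure h]
    (P : ℕ → C(B, ℂ))
    (hnorm : ∀ F : Finset ℕ, ∫ κ, ∏ j ∈ F, ‖P j κ‖ ^ 2 ∂h = 1) :
    Tendsto (fun N : ℕ => ∫ κ, ∏ k ∈ Finset.range (N + 1), ‖P k κ‖ ∂h) atTop (nhds 0) ↔
    ∀ ε : ℝ, 0 < ε → ∃ F : Finset ℕ, F.Nonempty ∧ ∫ κ, ∏ j ∈ F, ‖P j κ‖ ∂h < ε :=
  full_products_tendsto_zero_iff_inf_zero_general h P hnorm
end

section
/- Let f_N, g be functions on a compact probability space with f_N ≥ 0, ∫ f_N² dh = 1, and suppose the measures f_N² dh converge weakly to a measure μ. If for every ε > 0 there is a continuous function φ with 0 ≤ φ ≤ 1, μ({φ ≠ 0}) ≤ ε, and h({φ ≠ 1}) ≤ ε (i.e., μ ⊥ h), then ∫ f_N dh → 0. -/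
/-! Split `∫ f_N = ∫ φ f_N + ∫ (1 - φ) f_N` and apply Cauchy–Schwarz with the weights `φ` and
`1 - φ`. The first term is at most `√(∫ φ f_N² dh)`, which tends to `√(∫ φ dμ) ≤ √(μ {φ ≠ 0})`;
the second is at most `√(h {φ ≠ 1}) · ‖f_N‖₂ = √(h {φ ≠ 1})`. -/

open MeasureTheory Filter Set

section

variable {α : Type*} [MeasurableSpace α] {μ : Measure α}

theorem memLp_two_of_nonneg_of_integral_sq_ne_zero {f : α → ℝ} (hf0 : 0 ≤ᵐ[μ] f)
    (hf2 : ∫ x, f x ^ 2 ∂μ ≠ 0) : MemLp f 2 μ := by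
  have hsq : Integrable (fun x => f x ^ 2) μ := Integrable.of_integral_ne_zero hf2
  have hf : AEStronglyMeasurable f μ := by
    refine (Real.continuous_sqrt.comp_aestronglyMeasurable hsq.aestronglyMeasurable).congr ?_
    filter_upwards [hf0] with x hx using Real.sqrt_sq hx
  exact (memLp_two_iff_integrable_sq hf).2 hsq

theorem integral_mul_le_sqrt_mul_sqrt_s11 {w g : α → ℝ} (hw0 : 0 ≤ᵐ[μ] w) (hg0 : 0 ≤ᵐ[μ] g)
    (hw : Integrable w μ) (hg : AEStronglyMeasurable g μ)
    (hwg : Integrable (fun x => w x * g x ^ 2) μ) :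
    ∫ x, w x * g x ∂μ ≤ √(∫ x, w x ∂μ) * √(∫ x, w x * g x ^ 2 ∂μ) := by
  have hsqrt : AEStronglyMeasurable (fun x => √(w x)) μ :=
    Real.continuous_sqrt.comp_aestronglyMeasurable hw.aestronglyMeasurable
  have hw_sq : (fun x => √(w x) ^ 2) =ᵐ[μ] w := by
    filter_upwards [hw0] with x hx using Real.sq_sqrt hx
  have hwg_sq : (fun x => (√(w x) * g x) ^ 2) =ᵐ[μ] fun x => w x * g x ^ 2 := by
    filter_upwards [hw0] with x hx using by rw [mul_pow, Real.sq_sqrt hx]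
  have holder := integral_mul_le_Lp_mul_Lq_of_nonneg Real.HolderConjugate.two_two
    (f := fun x => √(w x)) (g := fun x => √(w x) * g x)
    (Eventually.of_forall fun x => Real.sqrt_nonneg (w x))
    (by filter_upwards [hg0] with x hx using mul_nonneg (Real.sqrt_nonneg _) hx)
    (by simpa using (memLp_two_iff_integrable_sq hsqrt).2 (hw.congr hw_sq.symm))
    (by simpa using (memLp_two_iff_integrable_sq (f := fun x => √(w x) * g x)
      (hsqrt.mul hg)).2 (hwg.congr hwg_sq.symm))
  simp only [Real.rpow_two, ← Real.sqrt_eq_rpow] at holder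
  rwa [integral_congr_ae hw_sq, integral_congr_ae hwg_sq, integral_congr_ae
    (by filter_upwards [hw0] with x hx using by rw [← mul_assoc, Real.mul_self_sqrt hx])] at holder

theorem integral_le_of_measure_support_le {φ : α → ℝ} {c : ℝ} (hc : 0 ≤ c)
    (hφ : ∀ x, |φ x| ≤ 1) (hs : μ (Function.support φ) ≤ ENNReal.ofReal c) :
    ∫ x, φ x ∂μ ≤ c := by
  rw [← setIntegral_support]
  calc ∫ x in Function.support φ, φ x ∂μ ≤ ‖∫ x in Function.support φ, φ x ∂μ‖ := le_abs_self _
    _ ≤ 1 * μ.real (Function.support φ) :=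
      norm_setIntegral_le_of_norm_le_const (hs.trans_lt ENNReal.ofReal_lt_top) fun x _ => hφ x
    _ ≤ c := by rw [one_mul]; exact ENNReal.toReal_le_of_le_ofReal hc hs

theorem integral_le_sqrt_add_sqrt_mul_sqrt [IsProbabilityMeasure μ] {f φ : α → ℝ}
    (hf0 : ∀ x, 0 ≤ f x) (hf : MemLp f 2 μ) (hφ : AEStronglyMeasurable φ μ)
    (hφ01 : ∀ x, φ x ∈ Icc 0 1) :
    ∫ x, f x ∂μ ≤
      √(∫ x, φ x * f x ^ 2 ∂μ) + √(∫ x, 1 - φ x ∂μ) * √(∫ x, f x ^ 2 ∂μ) := by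
  have hψ : AEStronglyMeasurable (fun x => 1 - φ x) μ := aestronglyMeasurable_const.sub hφ
  have hφ_le : ∀ᵐ x ∂μ, ‖φ x‖ ≤ 1 := ae_of_all _ fun x => by
    rw [Real.norm_of_nonneg (hφ01 x).1]; exact (hφ01 x).2
  have hψ_le : ∀ᵐ x ∂μ, ‖1 - φ x‖ ≤ 1 := ae_of_all _ fun x => by
    rw [Real.norm_of_nonneg (sub_nonneg.2 (hφ01 x).2)]; linarith [(hφ01 x).1]
  have hf_int : Integrable f μ := hf.integrable one_le_two
  have hsq : Integrable (fun x => f x ^ 2) μ := hf.integrable_sq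
  have hφf : ∫ x, φ x * f x ∂μ ≤ √(∫ x, φ x * f x ^ 2 ∂μ) := by
    have hφ_int : Integrable φ μ := (integrable_const 1).mono' hφ hφ_le
    calc ∫ x, φ x * f x ∂μ ≤ √(∫ x, φ x ∂μ) * √(∫ x, φ x * f x ^ 2 ∂μ) :=
          integral_mul_le_sqrt_mul_sqrt_s11 (ae_of_all _ fun x => (hφ01 x).1) (ae_of_all _ hf0)
            hφ_int hf.aestronglyMeasurable (hsq.bdd_mul hφ hφ_le)
      _ ≤ √(∫ x, φ x * f x ^ 2 ∂μ) := by
          refine mul_le_of_le_one_left (Real.sqrt_nonneg _) (Real.sqrt_le_one.mpr ?_)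
          simpa using integral_mono hφ_int (integrable_const 1) fun x => (hφ01 x).2
  have hψf : ∫ x, (1 - φ x) * f x ∂μ ≤ √(∫ x, 1 - φ x ∂μ) * √(∫ x, f x ^ 2 ∂μ) := by
    calc ∫ x, (1 - φ x) * f x ∂μ
        ≤ √(∫ x, 1 - φ x ∂μ) * √(∫ x, (1 - φ x) * f x ^ 2 ∂μ) :=
          integral_mul_le_sqrt_mul_sqrt_s11 (ae_of_all _ fun x => sub_nonneg.2 (hφ01 x).2)
            (ae_of_all _ hf0) ((integrable_const 1).mono' hψ hψ_le) hf.aestronglyMeasurable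
            (hsq.bdd_mul hψ hψ_le)
      _ ≤ _ := by
          refine mul_le_mul_of_nonneg_left (Real.sqrt_le_sqrt ?_) (Real.sqrt_nonneg _)
          exact integral_mono (hsq.bdd_mul hψ hψ_le) hsq fun x =>
            mul_le_of_le_one_left (sq_nonneg _) (sub_le_self _ (hφ01 x).1)
  have hsplit : ∫ x, f x ∂μ = ∫ x, φ x * f x ∂μ + ∫ x, (1 - φ x) * f x ∂μ := by
    rw [← integral_add (hf_int.bdd_mul hφ hφ_le) (hf_int.bdd_mul hψ hψ_le)]
    congr 1 with x
    ring
  linarith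

end

theorem integral_tendsto_zero_of_singular_general
    {X : Type*} [TopologicalSpace X]
    [MeasurableSpace X] [BorelSpace X]
    (h : Measure X) [IsProbabilityMeasure h]
    (f : ℕ → X → ℝ) (hf0 : ∀ N x, 0 ≤ f N x)
    (hf2 : ∀ N, ∫ x, f N x ^ 2 ∂h = 1)
    (μ : Measure X)
    (hweak : ∀ g : C(X, ℝ),
      Tendsto (fun N : ℕ => ∫ x, g x * f N x ^ 2 ∂h) atTop (nhds (∫ x, g x ∂μ)))
    (hsing : ∀ ε : ℝ, 0 < ε → ∃ φ : C(X, ℝ),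
      (∀ x, 0 ≤ φ x ∧ φ x ≤ 1) ∧
      μ {x | φ x ≠ 0} ≤ ENNReal.ofReal ε ∧
      h {x | φ x ≠ 1} ≤ ENNReal.ofReal ε) :
    Tendsto (fun N : ℕ => ∫ x, f N x ∂h) atTop (nhds 0) := by
  refine tendsto_order.2 ⟨fun a ha => Eventually.of_forall fun N =>
    ha.trans_le (integral_nonneg (hf0 N)), fun a ha => ?_⟩
  obtain ⟨φ, hφ01, hμφ, hhφ⟩ := hsing ((a / 3) ^ 2) (by positivity)
  have hψ_support : Function.support (fun x => 1 - φ x) = {x | φ x ≠ 1} := by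
    ext x
    simp only [Function.mem_support, mem_ofPred_eq, ne_eq, sub_eq_zero]
    exact not_congr eq_comm
  have hμ : ∫ x, φ x ∂μ < (2 * a / 3) ^ 2 :=
    (integral_le_of_measure_support_le (by positivity)
      (fun x => abs_le.2 ⟨by linarith [(hφ01 x).1], (hφ01 x).2⟩) hμφ).trans_lt (by nlinarith)
  have hh : √(∫ x, 1 - φ x ∂h) ≤ a / 3 :=
    (Real.sqrt_le_left (by positivity)).2 <| integral_le_of_measure_support_le (by positivity)
      (fun x => abs_le.2 ⟨by linarith [(hφ01 x).2], by linarith [(hφ01 x).1]⟩)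
      (by rwa [hψ_support])
  filter_upwards [(hweak φ).eventually_lt_const hμ] with N hN
  calc ∫ x, f N x ∂h
      ≤ √(∫ x, φ x * f N x ^ 2 ∂h) + √(∫ x, 1 - φ x ∂h) * √(∫ x, f N x ^ 2 ∂h) :=
        integral_le_sqrt_add_sqrt_mul_sqrt (hf0 N)
          (memLp_two_of_nonneg_of_integral_sq_ne_zero (ae_of_all _ (hf0 N)) (by simp [hf2 N]))
          φ.continuous.aestronglyMeasurable hφ01
    _ < 2 * a / 3 + a / 3 * 1 := by
        rw [hf2 N, Real.sqrt_one]
        exact add_lt_add_of_lt_of_le ((Real.sqrt_lt' (by positivity)).2 hN) (by simpa using hh)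
    _ = a := by ring

/-- One direction of the Bourgain singularity criterion: if `f_N ≥ 0`, `∫ f_N² dh = 1`,
the measures `f_N² dh` converge weakly to `μ`, and `μ` is singular to `h` in the sense
that for every `ε > 0` there is a continuous `φ` with `0 ≤ φ ≤ 1`, `μ({φ ≠ 0}) ≤ ε` and
`h({φ ≠ 1}) ≤ ε`, then `∫ f_N dh → 0`. -/
theorem integral_tendsto_zero_of_singular
    {X : Type*} [TopologicalSpace X] [CompactSpace X] [T2Space X]
    [MeasurableSpace X] [BorelSpace X]
    (h : Measure X) [IsProbabilityMeasure h]
    (f : ℕ → X → ℝ) (hfc : ∀ N, Continuous (f N)) (hf0 : ∀ N x, 0 ≤ f N x)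
    (hf2 : ∀ N, ∫ x, f N x ^ 2 ∂h = 1)
    (μ : Measure X) [IsFiniteMeasure μ]
    (hweak : ∀ g : C(X, ℝ),
      Tendsto (fun N : ℕ => ∫ x, g x * f N x ^ 2 ∂h) atTop (nhds (∫ x, g x ∂μ)))
    (hsing : ∀ ε : ℝ, 0 < ε → ∃ φ : C(X, ℝ),
      (∀ x, 0 ≤ φ x ∧ φ x ≤ 1) ∧
      μ {x | φ x ≠ 0} ≤ ENNReal.ofReal ε ∧
      h {x | φ x ≠ 1} ≤ ENNReal.ofReal ε) :
    Tendsto (fun N : ℕ => ∫ x, f N x ∂h) atTop (nhds 0) :=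
  integral_tendsto_zero_of_singular_general h f hf0 hf2 μ hweak hsing
end

section
/- Bourgain criterion on bℝ: the generalized Riesz product μ = ∏_{k=0}^∞ |P_k|² dh is singular with respect to the Haar measure h on bℝ if and only if inf { ∫_{bℝ} ∏_{ℓ=1}^L |P_{n_ℓ}| dh : L ∈ ℕ, n₁ < n₂ < … < n_L } = 0. -/
/-!
Singularity `μ ⟂ₘ h` is equivalent to: for every `ε > 0` there is a continuous `u : B → [0, 1]`
with `∫ u dμ < ε` and `∫ (1 - u) dh < ε`. Given such `u`, testing the weak convergence against
`u` makes `∫ u Q² dh` small for `Q = ∏_{k ≤ n} |P_k|`, and AM-GM on the weights `u` and `1 - u`,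
together with `∫ Q² dh = 1`, makes `∫ Q dh` small. Conversely, if `q = ∏_{j ∈ F} |P_j|` has small
`h`-integral, `u = s² / (s² + q²)` works: `u q² ≤ s²` and the remaining factors of the partial
products have integral one, so `∫ u dμ ≤ s²`, while `1 - u ≤ q / (2 s)`.

The delicate step is to produce a continuous `u` from a Borel set `s` with `μ s = 0 = h sᶜ`,
since `μ` need not be regular. Inside a closed `K ⊆ s` of large Haar measure one finds a compact
`Gδ` set `C` of the same Haar measure; then `C = f⁻¹' {1}` for a continuous `f : B → [0, 1]` and
`u = f ^ j` works for large `j` by dominated convergence. Here `C = {x | x + N ⊆ K}` for a closed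
subgroup `N`, the intersection of a chain of neighbourhoods of `0`, chosen so that a compact `Gδ`
superset `A` of `K` with `h (A \ K) = 0` is `N`-invariant. Averaging `h` over the translates by
the Haar measure of `N` gives back `h`, and this shows that `h (A \ C) = 0`.
-/

open MeasureTheory Filter Set Topology
open scoped ENNReal Pointwise

structure NhdsZeroChain (G : Type*) [TopologicalSpace G] [AddGroup G] where
  V : ℕ → Set G
  mem_nhds : ∀ k, V k ∈ 𝓝 0
  isClosed : ∀ k, IsClosed (V k)
  neg_eq : ∀ k, -V k = V k
  add_subset : ∀ k, V (k + 1) + V (k + 1) ⊆ V k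

namespace NhdsZeroChain

variable {G : Type*} [TopologicalSpace G] [AddGroup G] (c : NhdsZeroChain G)

lemma zero_mem (k : ℕ) : (0 : G) ∈ c.V k := mem_of_mem_nhds (c.mem_nhds k)

lemma antitone : Antitone c.V :=
  antitone_nat_of_succ_le fun k x hx =>
    c.add_subset k (by simpa using add_mem_add hx (c.zero_mem _))

def addSubgroup : AddSubgroup G where
  carrier := ⋂ k, c.V k
  zero_mem' := mem_iInter.2 c.zero_mem
  add_mem' ha hb := mem_iInter.2 fun k =>
    c.add_subset k (add_mem_add (mem_iInter.1 ha (k + 1)) (mem_iInter.1 hb (k + 1)))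
  neg_mem' ha := mem_iInter.2 fun k => c.neg_eq k ▸ neg_mem_neg.2 (mem_iInter.1 ha k)

lemma isClosed_addSubgroup : IsClosed (c.addSubgroup : Set G) := isClosed_iInter c.isClosed

variable [IsTopologicalAddGroup G]

lemma exists_succ_subset (W : ℕ → Set G) (hW : ∀ k, W k ∈ 𝓝 0) :
    ∃ c : NhdsZeroChain G, ∀ k, c.V (k + 1) ⊆ W k := by
  choose! next hnext_nhds hnext_closed hnext_neg hnext_add using
    fun U (hU : U ∈ 𝓝 (0 : G)) => exists_closed_nhds_zero_neg_eq_add_subset hU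
  let V : ℕ → Set G := fun k => Nat.rec univ (fun k Vk => next (Vk ∩ W k)) k
  have hV : ∀ k, V k ∈ 𝓝 0 := fun k => by
    induction k with
    | zero => exact univ_mem
    | succ k ih => exact hnext_nhds _ (inter_mem ih (hW k))
  refine ⟨⟨V, hV, fun k => ?_, fun k => ?_, fun k => ?_⟩, fun k => ?_⟩
  · cases k with
    | zero => exact isClosed_univ
    | succ k => exact hnext_closed _ (inter_mem (hV k) (hW k))
  · cases k with
    | zero => exact neg_univ
    | succ k => exact hnext_neg _ (inter_mem (hV k) (hW k))
  · exact (hnext_add _ (inter_mem (hV k) (hW k))).trans inter_subset_left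
  · have h0 : (0 : G) ∈ V (k + 1) := mem_of_mem_nhds (hV (k + 1))
    intro x hx
    exact (hnext_add _ (inter_mem (hV k) (hW k)) (by simpa using add_mem_add hx h0)).2

lemma isGδ_of_forall_add_mem [CompactSpace G] {C : Set G} (hC : IsClosed C)
    (hCN : ∀ x ∈ C, ∀ n ∈ c.addSubgroup, x + n ∈ C) : IsGδ C := by
  suffices C = ⋂ k, C + interior (c.V k) by
    rw [this]
    exact .iInter_of_isOpen fun k => isOpen_interior.add_left
  refine Subset.antisymm (fun x hx => mem_iInter.2 fun k =>
    ⟨x, hx, 0, mem_interior_iff_mem_nhds.2 (c.mem_nhds k), add_zero x⟩) fun x hx => ?_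
  let T : ℕ → Set G := fun k => C ∩ (fun y => -y + x) ⁻¹' c.V k
  have hT : ∀ k, IsClosed (T k) := fun k => hC.inter ((c.isClosed k).preimage (by fun_prop))
  obtain ⟨y, hy⟩ := IsCompact.nonempty_iInter_of_sequence_nonempty_isCompact_isClosed T
    (fun k => inter_subset_inter_right _ (preimage_mono (c.antitone k.le_succ)))
    (fun k => by
      obtain ⟨y, hy, v, hv, hyv⟩ := add_subset_add_left interior_subset (mem_iInter.1 hx k)
      exact ⟨y, hy, by simpa [← hyv] using hv⟩)
    (hT 0).isCompact hT
  have hyx : -y + x ∈ c.addSubgroup := mem_iInter.2 fun k => (mem_iInter.1 hy k).2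
  simpa using hCN y (mem_iInter.1 hy 0).1 _ hyx

end NhdsZeroChain

lemma setOf_forall_dist_add_lt_mem_nhds {G : Type*} [TopologicalSpace G] [AddGroup G]
    [IsTopologicalAddGroup G] [CompactSpace G] (f : C(G, ℝ)) {ε : ℝ} (hε : 0 < ε) :
    {v : G | ∀ x, dist (f (x + v)) (f x) < ε} ∈ 𝓝 0 := by
  let := IsTopologicalAddGroup.leftUniformSpace G
  obtain ⟨t, ht, hts⟩ := mem_comap.1 <|
    CompactSpace.uniformContinuous_of_continuous f.continuous (Metric.dist_mem_uniformity hε)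
  refine mem_of_superset ht fun v hv x => ?_
  rw [dist_comm]
  exact hts (show -(x, x + v).1 + (x, x + v).2 ∈ t by simpa using hv)

lemma exists_nhdsZeroChain_forall_add_eq {G : Type*} [TopologicalSpace G] [AddGroup G]
    [IsTopologicalAddGroup G] [CompactSpace G] (f : C(G, ℝ)) :
    ∃ c : NhdsZeroChain G, ∀ x, ∀ n ∈ c.addSubgroup, f (x + n) = f x := by
  obtain ⟨c, hc⟩ := NhdsZeroChain.exists_succ_subset _
    fun k => setOf_forall_dist_add_lt_mem_nhds f (Nat.one_div_pos_of_nat (n := k))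
  refine ⟨c, fun x n hn => eq_of_forall_dist_le fun ε hε => ?_⟩
  obtain ⟨k, hk⟩ := exists_nat_one_div_lt hε
  exact (hc k (mem_iInter.1 hn (k + 1)) x).le.trans hk.le

lemma IsOpen.lowerSemicontinuous_measure_preimage_prodMk {X Y : Type*} [TopologicalSpace X]
    [TopologicalSpace Y] [MeasurableSpace Y] (ν : Measure Y) [ν.Regular] {U : Set (X × Y)}
    (hU : IsOpen U) : LowerSemicontinuous fun x => ν (Prod.mk x ⁻¹' U) := by
  intro x₀ r hr
  obtain ⟨L, hLU, hL, hrL⟩ := (hU.preimage (Continuous.prodMk_right x₀)).exists_lt_isCompact hr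
  obtain ⟨u, v, hu, -, hx₀u, hLv, huv⟩ := generalized_tube_lemma isCompact_singleton hL hU
    (by rintro ⟨x, y⟩ ⟨rfl, hy⟩; exact hLU hy)
  filter_upwards [hu.mem_nhds (hx₀u rfl)] with x hx
  exact hrL.trans_le (measure_mono fun y hy => huv ⟨hx, hLv hy⟩)

section Averaging

variable {G Y : Type*} [TopologicalSpace G] [AddGroup G] [IsTopologicalAddGroup G]
  [MeasurableSpace G] [BorelSpace G] [TopologicalSpace Y] [MeasurableSpace Y]
  [OpensMeasurableSpace Y] (ν : Measure Y) [IsProbabilityMeasure ν] {φ : Y → G}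

lemma measurable_map_add_left [ν.Regular] (hφ : Continuous φ) :
    Measurable fun x : G => ν.map (fun y => x + φ y) := by
  have : ∀ x : G, IsProbabilityMeasure (ν.map fun y => x + φ y) := fun x =>
    Measure.isProbabilityMeasure_map (hφ.measurable.const_add x).aemeasurable
  refine .measure_of_isPiSystem_of_isProbabilityMeasure BorelSpace.measurable_eq isPiSystem_isOpen
    fun O (hO : IsOpen O) => ?_
  simp_rw [Measure.map_apply (hφ.measurable.const_add _) hO.measurableSet]
  exact (hO.preimage (by fun_prop : Continuous fun p : G × Y => p.1 + φ p.2))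
    |>.lowerSemicontinuous_measure_preimage_prodMk ν |>.measurable

lemma bind_map_add_left_eq [ν.Regular] [CompactSpace G] (hφ : Continuous φ) (h : Measure G)
    [h.IsAddHaarMeasure] [IsProbabilityMeasure h] :
    h.bind (fun x => ν.map (fun y => x + φ y)) = h := by
  have hκ := (measurable_map_add_left ν hφ).aemeasurable (μ := h)
  set ρ := h.bind (fun x => ν.map (fun y => x + φ y))
  have : ∀ x : G, IsProbabilityMeasure (ν.map fun y => x + φ y) := fun x =>
    Measure.isProbabilityMeasure_map (hφ.measurable.const_add x).aemeasurable
  have : IsProbabilityMeasure ρ := ⟨by simp [ρ, Measure.bind_apply .univ hκ]⟩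
  have : ρ.IsAddLeftInvariant := ⟨fun g => Measure.ext fun E hE => by
    have hE' := hE.preimage (measurable_const_add g)
    rw [Measure.map_apply (measurable_const_add g) hE, Measure.bind_apply hE hκ,
      Measure.bind_apply hE' hκ]
    symm
    rw [← lintegral_add_left_eq_self _ g]
    congr with x
    rw [Measure.map_apply (hφ.measurable.const_add _) hE',
      Measure.map_apply (hφ.measurable.const_add _) hE]
    simp [Set.preimage, add_assoc]⟩
  have hρ := Measure.isAddInvariant_eq_smul_of_compactSpace ρ h
  have hc : ρ.addHaarScalarFactor h = 1 := by
    simpa using congr($hρ univ).symm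
  rw [hρ, hc, one_smul]

lemma ae_measure_setOf_add_mem_eq_zero [ν.Regular] [CompactSpace G] (hφ : Continuous φ)
    {h : Measure G} [h.IsAddHaarMeasure] [IsProbabilityMeasure h] {E : Set G}
    (hE : MeasurableSet E) (hE0 : h E = 0) : ∀ᵐ x ∂h, ν {y | x + φ y ∈ E} = 0 := by
  have hκ := measurable_map_add_left ν hφ
  rw [← bind_map_add_left_eq ν hφ h, Measure.bind_apply hE hκ.aemeasurable] at hE0
  filter_upwards [(lintegral_eq_zero_iff ((Measure.measurable_coe hE).comp hκ)).1 hE0] with x hx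
  have hx : (ν.map fun y => x + φ y) E = 0 := hx
  rwa [Measure.map_apply (hφ.measurable.const_add x) hE] at hx

end Averaging

lemma measure_diff_setOf_forall_add_mem_eq_zero {G : Type*} [TopologicalSpace G] [AddGroup G]
    [IsTopologicalAddGroup G] [CompactSpace G] [MeasurableSpace G] [BorelSpace G]
    (h : Measure G) [h.IsAddHaarMeasure] [IsProbabilityMeasure h] {N : AddSubgroup G}
    (hN : IsClosed (N : Set G)) {A K : Set G} (hA : MeasurableSet A)
    (hAN : ∀ x ∈ A, ∀ n ∈ N, x + n ∈ A) (hK : IsClosed K) (hAK : h (A \ K) = 0) :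
    h (A \ {x | ∀ n ∈ N, x + n ∈ K}) = 0 := by
  have : CompactSpace N := isCompact_iff_compactSpace.1 hN.isCompact
  let ν : Measure N := Measure.addHaarMeasure ⊤
  have : IsProbabilityMeasure ν := ⟨by
    simpa [TopologicalSpace.PositiveCompacts.coe_top] using
      Measure.addHaarMeasure_self (K₀ := (⊤ : TopologicalSpace.PositiveCompacts N))⟩
  refine measure_mono_null ?_ (ae_iff.1 (ae_measure_setOf_add_mem_eq_zero ν continuous_subtype_val
    (hA.diff hK.measurableSet) hAK))
  rintro x ⟨hxA, hx⟩
  obtain ⟨n, hn, hxn⟩ : ∃ n ∈ N, x + n ∉ K := by simpa using hx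
  have hopen : IsOpen {n : N | x + n ∉ K} := hK.isOpen_compl.preimage (by fun_prop)
  have hsub : {n : N | x + n ∉ K} ⊆ {n : N | x + n ∈ A \ K} := fun n hn => ⟨hAN x hxA n n.2, hn⟩
  exact fun h0 => hopen.measure_ne_zero ν ⟨⟨n, hn⟩, hxn⟩ (measure_mono_null hsub h0)

lemma IsClosed.exists_isGδ_superset_measure_diff_eq_zero {X : Type*} [TopologicalSpace X]
    [CompactSpace X] [RegularSpace X] [MeasurableSpace X] [OpensMeasurableSpace X]
    (μ : Measure X) [IsFiniteMeasure μ] [μ.OuterRegular] {K : Set X} (hK : IsClosed K) :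
    ∃ A, IsClosed A ∧ IsGδ A ∧ K ⊆ A ∧ μ (A \ K) = 0 := by
  choose O hKO hO hμO using fun j : ℕ =>
    K.exists_isOpen_lt_add (measure_ne_top μ K) (ENNReal.inv_ne_zero.2 (ENNReal.natCast_ne_top j))
  choose g hgK hgO _ using fun j => exists_continuous_one_zero_of_isCompact hK.isCompact
    (hO j).isClosed_compl (disjoint_compl_right_iff_subset.2 (hKO j))
  refine ⟨⋂ j, g j ⁻¹' {1}, isClosed_iInter fun j => isClosed_singleton.preimage (g j).continuous,
    .iInter fun j => (IsGδ.singleton 1).preimage (g j).continuous,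
    fun x hx => mem_iInter.2 fun j => hgK j hx, ?_⟩
  refine nonpos_iff_eq_zero.1 (ge_of_tendsto' ENNReal.tendsto_inv_nat_nhds_zero fun j => ?_)
  have hAO : ⋂ j, g j ⁻¹' {1} ⊆ O j := fun x hx => by_contra fun hxO => by
    simpa [hgO j hxO] using mem_iInter.1 hx j
  exact (measure_mono (sdiff_subset_sdiff_left hAO)).trans <|
    (measure_sdiff_le_iff_le_add hK.measurableSet.nullMeasurableSet (hKO j) (measure_ne_top μ K)).2
      (hμO j).le

theorem IsClosed.exists_isGδ_subset_measure_le {G : Type*} [TopologicalSpace G] [AddGroup G]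
    [IsTopologicalAddGroup G] [CompactSpace G] [MeasurableSpace G] [BorelSpace G]
    (h : Measure G) [h.IsAddHaarMeasure] [IsProbabilityMeasure h] {K : Set G} (hK : IsClosed K) :
    ∃ C ⊆ K, IsClosed C ∧ IsGδ C ∧ h K ≤ h C := by
  obtain ⟨A, hA, hAδ, hKA, hAK⟩ := hK.exists_isGδ_superset_measure_diff_eq_zero h
  obtain ⟨g, rfl, -⟩ := exists_continuous_one_zero_of_isCompact_of_isGδ hA.isCompact hAδ
    isClosed_empty (disjoint_empty _)
  obtain ⟨c, hc⟩ := exists_nhdsZeroChain_forall_add_eq g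
  set N := c.addSubgroup
  have hAN : ∀ x ∈ g ⁻¹' {1}, ∀ n ∈ N, x + n ∈ g ⁻¹' {1} := fun x hx n hn => by
    simpa [hc x n hn] using hx
  have hC : IsClosed {x | ∀ n ∈ N, x + n ∈ K} := by
    convert isClosed_biInter fun n (_ : n ∈ N) => hK.preimage (continuous_add_const n)
    ext; simp
  refine ⟨_, fun x hx => by simpa using hx 0 N.zero_mem, hC, ?_, ?_⟩
  · refine c.isGδ_of_forall_add_mem hC fun x hx n hn m hm => ?_
    rw [add_assoc]
    exact hx _ (N.add_mem hn hm)
  · calc h K ≤ h (g ⁻¹' {1}) := measure_mono hKA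
      _ ≤ h {x | ∀ n ∈ N, x + n ∈ K} := measure_mono_ae <| ae_le_set.2 <|
        measure_diff_setOf_forall_add_mem_eq_zero h c.isClosed_addSubgroup hA.measurableSet hAN
          hK hAK

lemma Continuous.integrable_of_compactSpace {X E : Type*} [TopologicalSpace X] [CompactSpace X]
    [MeasurableSpace X] [OpensMeasurableSpace X] [NormedAddCommGroup E] {μ : Measure X}
    [IsFiniteMeasure μ] {f : X → E} (hf : Continuous f) : Integrable f μ :=
  hf.integrable_of_hasCompactSupport (.of_compactSpace f)

section Singularity

variable {X : Type*} [MeasurableSpace X] {μ ν : Measure X}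

lemma measure_setOf_le_le_ofReal_integral_div [IsFiniteMeasure μ] {f : X → ℝ} (hf0 : 0 ≤ f)
    (hf : Integrable f μ) {c : ℝ} (hc : 0 < c) :
    μ {x | c ≤ f x} ≤ ENNReal.ofReal ((∫ x, f x ∂μ) / c) := by
  rw [← ofReal_measureReal (measure_ne_top _ _)]
  refine ENNReal.ofReal_le_ofReal ((le_div_iff₀ hc).2 ?_)
  rw [mul_comm]
  exact mul_meas_ge_le_integral_of_nonneg (ae_of_all _ hf0) hf c

lemma measure_limsup_setOf_le_eq_zero [IsFiniteMeasure μ] {f : ℕ → X → ℝ} (hf0 : ∀ m, 0 ≤ f m)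
    (hf : ∀ m, Integrable (f m) μ) (hsum : Summable fun m => ∫ x, f m x ∂μ) {c : ℝ} (hc : 0 < c) :
    μ (limsup (fun m => {x | c ≤ f m x}) atTop) = 0 := by
  refine measure_limsup_atTop_eq_zero (ne_top_of_le_ne_top ?_ (ENNReal.tsum_le_tsum fun m =>
    measure_setOf_le_le_ofReal_integral_div (hf0 m) (hf m) hc))
  rw [← ENNReal.ofReal_tsum_of_nonneg (fun m => div_nonneg (integral_nonneg (hf0 m)) hc.le)
    (hsum.div_const c)]
  exact ENNReal.ofReal_ne_top

theorem mutuallySingular_of_forall_exists_integral_lt [IsFiniteMeasure μ] [IsFiniteMeasure ν]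
    (H : ∀ ε > 0, ∃ g : X → ℝ, Measurable g ∧ (∀ x, g x ∈ Icc (0 : ℝ) 1) ∧
      ∫ x, g x ∂μ < ε ∧ ∫ x, 1 - g x ∂ν < ε) : μ ⟂ₘ ν := by
  choose g hg hg01 hgμ hgν using fun m : ℕ => H ((1 / 2) ^ m) (by positivity)
  have hint : ∀ (ρ : Measure X) [IsFiniteMeasure ρ] (m : ℕ), Integrable (g m) ρ := fun ρ _ m =>
    (integrable_const (1 : ℝ)).mono' (hg m).aestronglyMeasurable (ae_of_all _ fun x =>
      abs_le.2 ⟨by linarith [(hg01 m x).1], (hg01 m x).2⟩)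
  have hsum : ∀ (ρ : Measure X) (f : ℕ → X → ℝ), (∀ m, 0 ≤ f m) →
      (∀ m, ∫ x, f m x ∂ρ < (1 / 2) ^ m) → Summable fun m => ∫ x, f m x ∂ρ :=
    fun ρ f hf0 hf => .of_nonneg_of_le (fun m => integral_nonneg (hf0 m)) (fun m => (hf m).le)
      summable_geometric_two
  refine .mk (measure_limsup_setOf_le_eq_zero (c := 1 / 2) (fun m x => (hg01 m x).1) (hint μ)
      (hsum μ g (fun m x => (hg01 m x).1) hgμ) (by norm_num))
    (measure_limsup_setOf_le_eq_zero (c := 1 / 2) (fun m x => sub_nonneg.2 (hg01 m x).2)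
      (fun m => (integrable_const 1).sub (hint ν m))
      (hsum ν _ (fun m x => sub_nonneg.2 (hg01 m x).2) hgν) (by norm_num)) fun x _ => ?_
  simp only [mem_union, mem_limsup_iff_frequently_mem, mem_ofPred_eq, ← frequently_or_distrib]
  exact .of_forall fun m => (le_total (1 / 2) (g m x)).imp id fun h => by linarith

lemma tendsto_integral_pow_of_mem_Icc [IsFiniteMeasure μ] {f : X → ℝ} (hf : Measurable f)
    (hf01 : ∀ x, f x ∈ Icc (0 : ℝ) 1) :
    Tendsto (fun j : ℕ => ∫ x, f x ^ j ∂μ) atTop (𝓝 (μ.real (f ⁻¹' {1}))) := by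
  rw [← integral_indicator_one ((measurableSet_singleton 1).preimage hf)]
  refine tendsto_integral_of_dominated_convergence (fun _ => 1)
    (fun j => (hf.pow_const j).aestronglyMeasurable) (integrable_const 1)
    (fun j => ae_of_all _ fun x => ?_) (ae_of_all _ fun x => ?_)
  · rw [norm_pow, Real.norm_eq_abs, abs_of_nonneg (hf01 x).1]
    exact pow_le_one₀ (hf01 x).1 (hf01 x).2
  · rcases (hf01 x).2.eq_or_lt with hx | hx
    · simp [hx]
    · rw [indicator_of_notMem (by simpa using hx.ne)]
      exact tendsto_pow_atTop_nhds_zero_of_lt_one (hf01 x).1 hx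

end Singularity

section CompactGroup

variable {G : Type*} [TopologicalSpace G] [AddGroup G] [IsTopologicalAddGroup G] [CompactSpace G]
  [MeasurableSpace G] [BorelSpace G] (h : Measure G) [h.IsAddHaarMeasure] [IsProbabilityMeasure h]
  {μ : Measure G} [IsFiniteMeasure μ]

theorem MeasureTheory.Measure.MutuallySingular.exists_continuous_integral_lt (hμh : μ ⟂ₘ h) {ε : ℝ}
    (hε : 0 < ε) : ∃ u : C(G, ℝ), (∀ x, u x ∈ Icc (0 : ℝ) 1) ∧
      ∫ x, u x ∂μ < ε ∧ ∫ x, 1 - u x ∂h < ε := by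
  obtain ⟨s, hs, hμs, hhs⟩ := hμh
  obtain ⟨K, hKs, hK, hhK⟩ :=
    hs.exists_isClosed_lt_add (measure_ne_top h s) (ENNReal.ofReal_pos.2 hε).ne'
  obtain ⟨C, hCK, hC, hCδ, hKC⟩ := hK.exists_isGδ_subset_measure_le h
  obtain ⟨f, rfl, -, -, hf01⟩ := exists_continuous_one_zero_of_isCompact_of_isGδ hC.isCompact
    hCδ isClosed_empty (disjoint_empty _)
  have hμC : μ.real (f ⁻¹' {1}) < ε := by
    simpa [measureReal_def, measure_mono_null (hCK.trans hKs) hμs] using hε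
  have hhC : 1 - ε < h.real (f ⁻¹' {1}) := by
    have h1 : (1 : ℝ≥0∞) < h (f ⁻¹' {1}) + ENNReal.ofReal ε :=
      calc 1 = h s := ((prob_compl_eq_zero_iff hs).1 hhs).symm
        _ < h K + ENNReal.ofReal ε := hhK
        _ ≤ h (f ⁻¹' {1}) + ENNReal.ofReal ε := add_le_add_left hKC _
    have h2 := ENNReal.toReal_strict_mono (by finiteness) h1
    rw [ENNReal.toReal_add (measure_ne_top _ _) ENNReal.ofReal_ne_top,
      ENNReal.toReal_ofReal hε.le, ENNReal.toReal_one] at h2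
    rw [measureReal_def]
    linarith
  have hf := f.continuous.measurable
  obtain ⟨j, hμj, hhj⟩ :=
    (((tendsto_integral_pow_of_mem_Icc hf hf01).eventually_lt_const hμC).and
      ((tendsto_integral_pow_of_mem_Icc (μ := h) hf hf01).eventually_const_lt hhC)).exists
  refine ⟨f ^ j, fun x => ?_, by simpa using hμj, ?_⟩
  · simpa using ⟨pow_nonneg (hf01 x).1 j, pow_le_one₀ (hf01 x).1 (hf01 x).2⟩
  · rw [integral_sub (integrable_const 1) (f ^ j).continuous.integrable_of_compactSpace]
    simp only [integral_const, ContinuousMap.coe_pow, Pi.pow_apply, probReal_univ, smul_eq_mul,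
      one_mul]
    linarith

theorem mutuallySingular_iff_forall_exists_continuous :
    μ ⟂ₘ h ↔ ∀ ε > 0, ∃ u : C(G, ℝ), (∀ x, u x ∈ Icc (0 : ℝ) 1) ∧
      ∫ x, u x ∂μ < ε ∧ ∫ x, 1 - u x ∂h < ε :=
  ⟨fun hμh _ hε => hμh.exists_continuous_integral_lt h hε,
    fun H => mutuallySingular_of_forall_exists_integral_lt fun ε hε =>
      let ⟨u, hu01, hμu, hhu⟩ := H ε hε
      ⟨u, u.continuous.measurable, hu01, hμu, hhu⟩⟩

end CompactGroup

lemma integral_lt_two_mul_of_integral_mul_sq_lt {X : Type*} [TopologicalSpace X] [CompactSpace X]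
    [MeasurableSpace X] [OpensMeasurableSpace X] {ν : Measure X} [IsProbabilityMeasure ν]
    {Q u : X → ℝ} (hQ : Continuous Q) (hu : Continuous u)
    (hu01 : ∀ x, u x ∈ Icc (0 : ℝ) 1) {c : ℝ} (hc : 0 < c)
    (hQu : ∫ x, u x * Q x ^ 2 ∂ν < c ^ 2) (hQ2 : ∫ x, Q x ^ 2 ∂ν ≤ 1)
    (hu1 : ∫ x, 1 - u x ∂ν < c ^ 2) : ∫ x, Q x ∂ν < 2 * c := by
  have hi : ∀ {f : X → ℝ}, Continuous f → Integrable f ν := fun hf => hf.integrable_of_compactSpace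
  have hpt : ∀ x, Q x ≤
      (u x * Q x ^ 2 / c + c * u x + c * ((1 - u x) * Q x ^ 2) + (1 - u x) / c) / 2 := fun x => by
    have key : (u x * Q x ^ 2 / c + c * u x + c * ((1 - u x) * Q x ^ 2) + (1 - u x) / c) / 2 - Q x
        = (u x * (Q x - c) ^ 2 + (1 - u x) * (c * Q x - 1) ^ 2) / (2 * c) := by
      field_simp
      ring
    have : 0 ≤ (u x * (Q x - c) ^ 2 + (1 - u x) * (c * Q x - 1) ^ 2) / (2 * c) := by
      have hu0 : 0 ≤ u x := (hu01 x).1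
      have hu1 : 0 ≤ 1 - u x := sub_nonneg.2 (hu01 x).2
      positivity
    linarith
  have hu_le : ∫ x, u x ∂ν ≤ 1 := by
    simpa using integral_mono (hi hu) (integrable_const 1) fun x => (hu01 x).2
  have hQ2u : ∫ x, (1 - u x) * Q x ^ 2 ∂ν ≤ 1 := hQ2.trans' <|
    integral_mono (hi (by fun_prop)) (hi (by fun_prop)) fun x => by
      nlinarith [(hu01 x).1, sq_nonneg (Q x)]
  have h1 : (∫ x, u x * Q x ^ 2 ∂ν) / c < c := by rw [div_lt_iff₀ hc]; nlinarith
  have h2 : (∫ x, 1 - u x ∂ν) / c < c := by rw [div_lt_iff₀ hc]; nlinarith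
  calc ∫ x, Q x ∂ν
      ≤ ∫ x, (u x * Q x ^ 2 / c + c * u x + c * ((1 - u x) * Q x ^ 2) + (1 - u x) / c) / 2 ∂ν :=
        integral_mono (hi hQ) (hi (by fun_prop)) hpt
    _ = ((∫ x, u x * Q x ^ 2 ∂ν) / c + c * ∫ x, u x ∂ν + c * ∫ x, (1 - u x) * Q x ^ 2 ∂ν
          + (∫ x, 1 - u x ∂ν) / c) / 2 := by
        rw [integral_div, integral_add (hi (by fun_prop)) (hi (by fun_prop)),
          integral_add (hi (by fun_prop)) (hi (by fun_prop)),
          integral_add (hi (by fun_prop)) (hi (by fun_prop)), integral_div, integral_const_mul,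
          integral_const_mul, integral_div]
    _ < 2 * c := by nlinarith

section RieszProduct

variable {B : Type*} [TopologicalSpace B] [CompactSpace B] [MeasurableSpace B]
  [OpensMeasurableSpace B] {h μ : Measure B} [IsFiniteMeasure h] {P : ℕ → C(B, ℂ)}

lemma integral_le_of_forall_mul_prod_sq_le
    (hnorm : ∀ F : Finset ℕ, ∫ κ, ∏ j ∈ F, ‖P j κ‖ ^ 2 ∂h = 1)
    (hweak : ∀ g : C(B, ℝ),
      Tendsto (fun n : ℕ => ∫ κ, g κ * ∏ k ∈ Finset.range (n + 1), ‖P k κ‖ ^ 2 ∂h)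
        atTop (𝓝 (∫ κ, g κ ∂μ)))
    (w : C(B, ℝ)) (F : Finset ℕ) {t : ℝ} (hw : ∀ κ, w κ * ∏ j ∈ F, ‖P j κ‖ ^ 2 ≤ t) :
    ∫ κ, w κ ∂μ ≤ t := by
  refine le_of_tendsto (hweak w) (eventually_atTop.2 ⟨F.sup id, fun n hn => ?_⟩)
  have hF : F ⊆ Finset.range (n + 1) := fun j hj =>
    Finset.mem_range.2 (Nat.lt_succ_of_le ((Finset.le_sup (f := id) hj).trans hn))
  calc ∫ κ, w κ * ∏ k ∈ Finset.range (n + 1), ‖P k κ‖ ^ 2 ∂h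
      = ∫ κ, (w κ * ∏ j ∈ F, ‖P j κ‖ ^ 2) * ∏ k ∈ Finset.range (n + 1) \ F, ‖P k κ‖ ^ 2 ∂h := by
        congr with κ
        rw [← Finset.prod_sdiff hF]
        ring
    _ ≤ ∫ κ, t * ∏ k ∈ Finset.range (n + 1) \ F, ‖P k κ‖ ^ 2 ∂h :=
        integral_mono (Continuous.integrable_of_compactSpace (by fun_prop))
          (Continuous.integrable_of_compactSpace (by fun_prop))
          fun κ => mul_le_mul_of_nonneg_right (hw κ) (by positivity)
    _ = t := by rw [integral_const_mul, hnorm, mul_one]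

lemma exists_continuous_integral_le_of_integral_prod
    (hnorm : ∀ F : Finset ℕ, ∫ κ, ∏ j ∈ F, ‖P j κ‖ ^ 2 ∂h = 1)
    (hweak : ∀ g : C(B, ℝ),
      Tendsto (fun n : ℕ => ∫ κ, g κ * ∏ k ∈ Finset.range (n + 1), ‖P k κ‖ ^ 2 ∂h)
        atTop (𝓝 (∫ κ, g κ ∂μ)))
    (F : Finset ℕ) {s : ℝ} (hs : 0 < s) :
    ∃ u : C(B, ℝ), (∀ κ, u κ ∈ Icc (0 : ℝ) 1) ∧ ∫ κ, u κ ∂μ ≤ s ^ 2 ∧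
      ∫ κ, 1 - u κ ∂h ≤ (∫ κ, ∏ j ∈ F, ‖P j κ‖ ∂h) / (2 * s) := by
  set q : B → ℝ := fun κ => ∏ j ∈ F, ‖P j κ‖
  have hq : Continuous q := by fun_prop
  have hq0 : ∀ κ, 0 ≤ q κ := fun κ => Finset.prod_nonneg fun j _ => norm_nonneg _
  have hden : ∀ κ, 0 < s ^ 2 + q κ ^ 2 := fun κ => by positivity
  let u : C(B, ℝ) := ⟨fun κ => s ^ 2 / (s ^ 2 + q κ ^ 2),
    continuous_const.div (by fun_prop) fun κ => (hden κ).ne'⟩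
  refine ⟨u, fun κ => ⟨div_nonneg (sq_nonneg s) (hden κ).le,
    (div_le_one (hden κ)).2 (by nlinarith [sq_nonneg (q κ)])⟩,
    integral_le_of_forall_mul_prod_sq_le hnorm hweak u F fun κ => ?_, ?_⟩
  · show s ^ 2 / (s ^ 2 + q κ ^ 2) * ∏ j ∈ F, ‖P j κ‖ ^ 2 ≤ s ^ 2
    rw [Finset.prod_pow, div_mul_eq_mul_div, div_le_iff₀ (hden κ)]
    nlinarith [sq_nonneg (q κ), sq_nonneg s, mul_nonneg (sq_nonneg s) (sq_nonneg s)]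
  · calc ∫ κ, 1 - u κ ∂h ≤ ∫ κ, q κ / (2 * s) ∂h :=
          integral_mono (Continuous.integrable_of_compactSpace (by fun_prop))
            (Continuous.integrable_of_compactSpace (by fun_prop)) fun κ => ?_
      _ = (∫ κ, q κ ∂h) / (2 * s) := integral_div _ _
    show 1 - s ^ 2 / (s ^ 2 + q κ ^ 2) ≤ q κ / (2 * s)
    rw [one_sub_div (hden κ).ne', add_sub_cancel_left, div_le_div_iff₀ (hden κ) (by positivity)]
    nlinarith [mul_nonneg (hq0 κ) (sq_nonneg (s - q κ))]

end RieszProduct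

theorem bourgain_criterion_general
    {B : Type*} [TopologicalSpace B] [CompactSpace B] [AddCommGroup B]
    [IsTopologicalAddGroup B] [MeasurableSpace B] [BorelSpace B]
    (h : Measure B) [IsProbabilityMeasure h] [Measure.IsAddHaarMeasure h]
    (P : ℕ → C(B, ℂ))
    (hnorm : ∀ F : Finset ℕ, ∫ κ, ∏ j ∈ F, ‖P j κ‖ ^ 2 ∂h = 1)
    (μ : Measure B) [IsProbabilityMeasure μ]
    (hweak : ∀ g : C(B, ℝ),
      Tendsto (fun n : ℕ => ∫ κ, g κ * ∏ k ∈ Finset.range (n + 1), ‖P k κ‖ ^ 2 ∂h)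
        atTop (nhds (∫ κ, g κ ∂μ))) :
    μ ⟂ₘ h ↔
      ∀ ε : ℝ, 0 < ε → ∃ F : Finset ℕ, F.Nonempty ∧ ∫ κ, ∏ j ∈ F, ‖P j κ‖ ∂h < ε := by
  rw [mutuallySingular_iff_forall_exists_continuous h]
  constructor
  · intro hsep ε hε
    obtain ⟨u, hu01, hμu, hhu⟩ := hsep ((ε / 2) ^ 2) (by positivity)
    obtain ⟨n, hn⟩ := ((hweak u).eventually_lt_const hμu).exists
    refine ⟨Finset.range (n + 1), Finset.nonempty_range_add_one, ?_⟩
    have := integral_lt_two_mul_of_integral_mul_sq_lt (ν := h)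
      (Q := fun κ => ∏ j ∈ Finset.range (n + 1), ‖P j κ‖) (by fun_prop) u.continuous hu01
      (half_pos hε) (by simpa only [← Finset.prod_pow] using hn)
      (by simp only [← Finset.prod_pow, hnorm, le_refl]) hhu
    linarith
  · intro hinf ε hε
    obtain ⟨F, -, hF⟩ := hinf (ε * √ε) (by positivity)
    obtain ⟨u, hu01, hμu, hhu⟩ :=
      exists_continuous_integral_le_of_integral_prod hnorm hweak F (s := √ε / 2) (by positivity)
    refine ⟨u, hu01, hμu.trans_lt ?_, hhu.trans_lt ?_⟩
    · rw [div_pow, Real.sq_sqrt hε.le]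
      linarith
    · rw [div_lt_iff₀ (by positivity)]
      linarith

/-- Bourgain criterion on the Bohr compactification of `ℝ`: the generalized Riesz product
`μ = ∏_{k=0}^∞ |P_k|² dh` (the weak limit of the partial products against the Haar
probability measure `h`) is singular with respect to `h` if and only if
`inf { ∫ ∏_{ℓ=1}^L |P_{n_ℓ}| dh : L ∈ ℕ, n₁ < … < n_L } = 0`. -/
theorem bourgain_criterion
    {B : Type*} [TopologicalSpace B] [CompactSpace B] [T2Space B] [AddCommGroup B]
    [IsTopologicalAddGroup B] [MeasurableSpace B] [BorelSpace B]
    (h : Measure B) [IsProbabilityMeasure h] [Measure.IsAddHaarMeasure h]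
    (P : ℕ → C(B, ℂ))
    (hnorm : ∀ F : Finset ℕ, ∫ κ, ∏ j ∈ F, ‖P j κ‖ ^ 2 ∂h = 1)
    (μ : Measure B) [IsProbabilityMeasure μ]
    (hweak : ∀ g : C(B, ℝ),
      Tendsto (fun n : ℕ => ∫ κ, g κ * ∏ k ∈ Finset.range (n + 1), ‖P k κ‖ ^ 2 ∂h)
        atTop (nhds (∫ κ, g κ ∂μ))) :
    μ ⟂ₘ h ↔
      ∀ ε : ℝ, 0 < ε → ∃ F : Finset ℕ, F.Nonempty ∧ ∫ κ, ∏ j ∈ F, ‖P j κ‖ ∂h < ε :=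
  bourgain_criterion_general h P hnorm μ hweak
end
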